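/- Assume Assumption A holds and that ∇f : 𝕏 → 𝕏 is locally Lipschitz continuous. Then each accumulation point x* of a sequence {x^k} generated by the monotone proximal gradient method is an M-stationary point, i.e., x* ∈ dom φ and 0 ∈ ∇f(x*) + ∂φ(x*). (Theorem 3.6, second case.) -/

import Mathlib

open Filter Topology RealInnerProductSpace

noncomputable section

variable {E : Type*} [NormedAddCommGroup E] [InnerProductSpace ℝ E] [FiniteDimensional ℝ E]

/-- The objective `ψ = f + φ`, with values in `EReal`. -/
def psi (f : E → ℝ) (φ : E → EReal) (x : E) : EReal :=
  (f x : EReal) + φ x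

/-- `φ` is bounded from below by an affine function. -/
def AffineBoundedBelow (φ : E → EReal) : Prop :=
  ∃ (a : E) (b : ℝ), ∀ x : E, ((⟪a, x⟫ + b : ℝ) : EReal) ≤ φ x

/-- Objective of the proximal subproblem at `xb` with parameter `γ`. -/
def proxObj (f : E → ℝ) (φ : E → EReal) (xb : E) (γ : ℝ) (x : E) : EReal :=
  ((f xb + ⟪gradient f xb, x - xb⟫ + γ / 2 * ‖x - xb‖ ^ 2 : ℝ) : EReal) + φ x

/-- `x` is a global minimizer of the proximal subproblem at `xb` with parameter `γ`. -/
def IsProxMin (f : E → ℝ) (φ : E → EReal) (xb : E) (γ : ℝ) (x : E) : Prop :=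
  ∀ y : E, proxObj f φ xb γ x ≤ proxObj f φ xb γ y

/-- Fréchet (regular) subdifferential of `φ` at `x`. -/
def FrechetSubdiff (φ : E → EReal) (x : E) : Set E :=
  {η : E | ∀ ε : ℝ, 0 < ε →
    ∀ᶠ y in 𝓝[≠] x, φ x + ((⟪η, y - x⟫ - ε * ‖y - x‖ : ℝ) : EReal) ≤ φ y}

/-- Limiting (Mordukhovich) subdifferential of `φ` at `x`. -/
def LimitingSubdiff (φ : E → EReal) (x : E) : Set E :=
  {η : E | ∃ u v : ℕ → E,
    Tendsto u atTop (𝓝 x) ∧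
    Tendsto (fun j => φ (u j)) atTop (𝓝 (φ x)) ∧
    Tendsto v atTop (𝓝 η) ∧
    ∀ j : ℕ, v j ∈ FrechetSubdiff φ (u j)}

/-- `x` is an M-stationary point of `min f + φ`. -/
def MStationary (f : E → ℝ) (φ : E → EReal) (x : E) : Prop :=
  φ x ≠ ⊤ ∧ -gradient f x ∈ LimitingSubdiff φ x

/-- `ψ` is bounded from below on `dom φ`. -/
def PsiBddBelow (f : E → ℝ) (φ : E → EReal) : Prop :=
  ∃ c : ℝ, ∀ z : E, φ z ≠ ⊤ → (c : EReal) ≤ psi f φ z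

/-- The monotone proximal gradient method (Algorithm 3.1). -/
structure MonoPG (f : E → ℝ) (φ : E → EReal) (τ γmin γmax δ : ℝ)
    (x : ℕ → E) (γ : ℕ → ℝ) : Prop where
  dom : ∀ k : ℕ, φ (x k) ≠ ⊤
  stepsize : ∀ k : ℕ, ∃ γ0 : ℝ, ∃ i : ℕ, γ0 ∈ Set.Icc γmin γmax ∧ γ k = τ ^ i * γ0 ∧
    (1 ≤ i → ∃ xh : E, IsProxMin f φ (x k) (γ k / τ) xh ∧
      psi f φ (x k) < psi f φ xh + ((δ * (γ k / τ) / 2 * ‖xh - x k‖ ^ 2 : ℝ) : EReal))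
  isMin : ∀ k : ℕ, IsProxMin f φ (x k) (γ k) (x (k + 1))
  accept : ∀ k : ℕ,
    psi f φ (x (k + 1)) + ((δ * γ k / 2 * ‖x (k + 1) - x k‖ ^ 2 : ℝ) : EReal) ≤ psi f φ (x k)

/-- The nonmonotone reference value `max_{j=0,…,min{k,m}} ψ(x^{k-j})`. -/
def nmax (f : E → ℝ) (φ : E → EReal) (x : ℕ → E) (m k : ℕ) : EReal :=
  (Finset.range (min k m + 1)).sup fun j => psi f φ (x (k - j))

/-- The nonmonotone proximal gradient method (Algorithm 4.1). -/
structure NonmonoPG (f : E → ℝ) (φ : E → EReal) (τ γmin γmax δ : ℝ) (m : ℕ)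
    (x : ℕ → E) (γ : ℕ → ℝ) : Prop where
  dom : ∀ k : ℕ, φ (x k) ≠ ⊤
  stepsize : ∀ k : ℕ, ∃ γ0 : ℝ, ∃ i : ℕ, γ0 ∈ Set.Icc γmin γmax ∧ γ k = τ ^ i * γ0 ∧
    (1 ≤ i → ∃ xh : E, IsProxMin f φ (x k) (γ k / τ) xh ∧
      nmax f φ x m k < psi f φ xh + ((δ * (γ k / τ) / 2 * ‖xh - x k‖ ^ 2 : ℝ) : EReal))
  isMin : ∀ k : ℕ, IsProxMin f φ (x k) (γ k) (x (k + 1))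
  accept : ∀ k : ℕ,
    psi f φ (x (k + 1)) + ((δ * γ k / 2 * ‖x (k + 1) - x k‖ ^ 2 : ℝ) : EReal) ≤ nmax f φ x m k

/-- `l` realizes the nonmonotone maximum `ψ(x^{l(k)}) = max_{j=0,…,m_k} ψ(x^{k-j})`,
with `l k ∈ {k - m_k, …, k}`. -/
def RealizesNMax (f : E → ℝ) (φ : E → EReal) (x : ℕ → E) (m : ℕ) (l : ℕ → ℕ) : Prop :=
  ∀ k : ℕ, k - min k m ≤ l k ∧ l k ≤ k ∧ psi f φ (x (l k)) = nmax f φ x m k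

/-- `ψ` is uniformly continuous on the sublevel set `L_ψ(x⁰)`. -/
def UnifContOnLevelSet (f : E → ℝ) (φ : E → EReal) (x0 : E) : Prop :=
  ∀ ε : ℝ, 0 < ε → ∃ η : ℝ, 0 < η ∧ ∀ u v : E,
    psi f φ u ≤ psi f φ x0 → psi f φ v ≤ psi f φ x0 → ‖u - v‖ ≤ η →
    psi f φ u ≤ psi f φ v + (ε : EReal)

/-- `φ` is continuous on its domain `dom φ`. -/
def ContOnDom (φ : E → EReal) : Prop :=
  ∀ x : E, φ x ≠ ⊤ → ∀ y : ℕ → E, (∀ j : ℕ, φ (y j) ≠ ⊤) →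
    Tendsto y atTop (𝓝 x) → Tendsto (fun j => φ (y j)) atTop (𝓝 (φ x))

/-! The sufficient-decrease test forces `ψ(x^k)` down by `δ γ_k/2 ‖x^{k+1} - x^k‖²`; as `ψ` is
bounded below and `γ_k ≥ γ_min`, consecutive iterates merge, and lower semicontinuity puts `x*`
in `dom φ`. Near `x*` the gradient is `L`-Lipschitz, and the affine minorant of `φ` keeps the
minimizer of a subproblem with large parameter close to its base point, so the descent lemma
makes the test succeed for every parameter above a fixed threshold: backtracking cannot push
`γ_k` beyond a bound along the subsequence. The optimality condition of the subproblem makes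
`-∇f(x^k) - γ_k (x^{k+1} - x^k)` a Fréchet subgradient of `φ` at `x^{k+1}`; these subgradients
tend to `-∇f(x*)`, and the subproblem compared at `x*` bounds `φ(x^{k+1})` from above, which
together with lower semicontinuity gives `φ(x^{k+1}) → φ(x*)`. -/

theorem LowerSemicontinuous.le_of_tendsto_of_le {α β ι : Type*} [TopologicalSpace α]
    [LinearOrder β] [DenselyOrdered β] [TopologicalSpace β] [OrderTopology β] {φ : α → β}
    (hφ : LowerSemicontinuous φ) {l : Filter ι} [l.NeBot] {u : ι → α} {x : α} {c : ι → β}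
    {c₀ : β} (hu : Tendsto u l (𝓝 x)) (hc : Tendsto c l (𝓝 c₀))
    (hle : ∀ᶠ i in l, φ (u i) ≤ c i) : φ x ≤ c₀ := by
  by_contra! h
  obtain ⟨y, hc₀y, hyφ⟩ := exists_between h
  obtain ⟨i, hφi, hci, hlei⟩ :=
    ((hu.eventually (hφ x y hyφ)).and ((hc.eventually (eventually_lt_nhds hc₀y)).and hle)).exists
  exact lt_irrefl y ((hφi.trans_le hlei).trans hci)

theorem LowerSemicontinuous.tendsto_of_le {α β ι : Type*} [TopologicalSpace α]
    [LinearOrder β] [TopologicalSpace β] [OrderTopology β] {φ : α → β}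
    (hφ : LowerSemicontinuous φ) {l : Filter ι} {u : ι → α} {x : α} {c : ι → β}
    (hu : Tendsto u l (𝓝 x)) (hc : Tendsto c l (𝓝 (φ x)))
    (hle : ∀ᶠ i in l, φ (u i) ≤ c i) : Tendsto (fun i => φ (u i)) l (𝓝 (φ x)) :=
  tendsto_order.2 ⟨fun y hy => hu.eventually (hφ x y hy), fun _ hy =>
    ((hc.eventually (eventually_lt_nhds hy)).and hle).mono fun _ h => h.2.trans_lt h.1⟩

theorem LowerSemicontinuous.ne_top_of_tendsto {α ι : Type*} [TopologicalSpace α]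
    {f : α → ℝ} {φ : α → EReal} (hlsc : LowerSemicontinuous φ) (hf : Continuous f)
    (hbot : ∀ z, φ z ≠ ⊥) {l : Filter ι} [l.NeBot] {u : ι → α} {xstar : α} {C : ℝ}
    (hu : Tendsto u l (𝓝 xstar)) (hdom : ∀ i, φ (u i) ≠ ⊤)
    (hC : ∀ i, f (u i) + (φ (u i)).toReal ≤ C) : φ xstar ≠ ⊤ := by
  refine ne_top_of_le_ne_top (EReal.coe_ne_top (C - f xstar)) (hlsc.le_of_tendsto_of_le hu
    (c := fun i => ((C - f (u i) : ℝ) : EReal)) ?_ (Eventually.of_forall fun i => ?_))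
  · exact EReal.tendsto_coe.2 (tendsto_const_nhds.sub ((hf.tendsto xstar).comp hu))
  · rw [← EReal.coe_toReal (hdom i) (hbot _), EReal.coe_le_coe_iff]
    linarith [hC i]

theorem tendsto_zero_of_add_mul_sq_le {S d : ℕ → ℝ} {c : ℝ} (hc : 0 < c)
    (hS : BddBelow (Set.range S)) (h : ∀ k, S (k + 1) + c * d k ^ 2 ≤ S k) :
    Tendsto d atTop (𝓝 0) := by
  have hanti : Antitone S := antitone_nat_of_succ_le fun k => by
    nlinarith [h k, mul_nonneg hc.le (sq_nonneg (d k))]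
  have hgap : Tendsto (fun k => (S k - S (k + 1)) / c) atTop (𝓝 0) := by
    have hl := tendsto_atTop_ciInf hanti hS
    simpa using (hl.sub (hl.comp (tendsto_add_atTop_nat 1))).div_const c
  have hsq : Tendsto (fun k => d k ^ 2) atTop (𝓝 0) :=
    squeeze_zero (fun k => sq_nonneg _)
      (fun k => by rw [le_div_iff₀ hc]; linarith [h k]) hgap
  rw [tendsto_zero_iff_abs_tendsto_zero]
  simpa [Function.comp_def, Real.sqrt_sq_eq_abs] using hsq.sqrt

theorem lt_of_half_mul_sq_le_add_mul {γ A B ρ t : ℝ} (hρ : 0 < ρ) (hA : 0 ≤ A) (hB : 0 ≤ B)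
    (hγ : 2 * (A + B * ρ) / ρ ^ 2 < γ) (h : γ / 2 * t ^ 2 ≤ A + B * t) : t < ρ := by
  by_contra! hρt
  rw [div_lt_iff₀ (by positivity)] at hγ
  have hkey : (A + B * t) * ρ ^ 2 ≤ (A + B * ρ) * t ^ 2 := by
    nlinarith [mul_nonneg hA (mul_nonneg (sub_nonneg.2 hρt) (add_nonneg hρ.le (hρ.le.trans hρt))),
      mul_nonneg (mul_nonneg hB hρ.le) (mul_nonneg (hρ.le.trans hρt) (sub_nonneg.2 hρt))]
  nlinarith [mul_le_mul_of_nonneg_right h (sq_nonneg ρ),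
    mul_lt_mul_of_pos_right hγ (half_pos (pow_pos (hρ.trans_le hρt) 2))]

theorem coe_add_eq_coe_add_toReal (r : ℝ) {e : EReal} (h₁ : e ≠ ⊤) (h₂ : e ≠ ⊥) :
    (r : EReal) + e = ((r + e.toReal : ℝ) : EReal) := by
  rw [EReal.coe_add, EReal.coe_toReal h₁ h₂]

section Descent

variable {F : Type*} [NormedAddCommGroup F] [InnerProductSpace ℝ F] [CompleteSpace F]

/-- The descent lemma, with the constant `L` of the mean value inequality in place of the sharp
`L / 2`. -/
theorem le_add_inner_gradient_add_mul_sq {f : F → ℝ} (hf : Differentiable ℝ f) {s : Set F}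
    (hs : Convex ℝ s) {L : ℝ} (hL0 : 0 ≤ L) {u v : F}
    (hL : ∀ y ∈ s, ‖gradient f y - gradient f u‖ ≤ L * ‖y - u‖) (hu : u ∈ s) (hv : v ∈ s) :
    f v ≤ f u + ⟪gradient f u, v - u⟫ + L * ‖v - u‖ ^ 2 := by
  set g : F → ℝ := fun y => f y - InnerProductSpace.toDual ℝ F (gradient f u) y
  have hg : ∀ y, HasFDerivAt g
      (InnerProductSpace.toDual ℝ F (gradient f y - gradient f u)) y := fun y => by
    rw [map_sub]
    exact (hf y).hasGradientAt.hasFDerivAt.sub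
      (InnerProductSpace.toDual ℝ F (gradient f u)).hasFDerivAt
  have hbound : ∀ y ∈ segment ℝ u v,
      ‖InnerProductSpace.toDual ℝ F (gradient f y - gradient f u)‖ ≤ L * ‖v - u‖ :=
    fun y hy => by
      rw [LinearIsometryEquiv.norm_map]
      exact (hL y (hs.segment_subset hu hv hy)).trans
        (mul_le_mul_of_nonneg_left (norm_sub_le_of_mem_segment hy) hL0)
  have hmvt := (convex_segment u v).norm_image_sub_le_of_norm_hasFDerivWithin_le
    (fun y _ => (hg y).hasFDerivWithinAt) hbound (left_mem_segment ℝ u v)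
    (right_mem_segment ℝ u v)
  have hgvu : g v - g u = f v - f u - ⟪gradient f u, v - u⟫ := by
    simp only [g, InnerProductSpace.toDual_apply_apply, inner_sub_right]
    ring
  rw [hgvu, Real.norm_eq_abs] at hmvt
  nlinarith [le_abs_self (f v - f u - ⟪gradient f u, v - u⟫)]

theorem ContDiff.continuous_gradient {f : F → ℝ} (hf : ContDiff ℝ 1 f) :
    Continuous (gradient f) :=
  (InnerProductSpace.toDual ℝ F).symm.continuous.comp (hf.continuous_fderiv one_ne_zero)

end Descent

section ProxSubproblem

variable {f : E → ℝ} {φ : E → EReal} {xb xp y : E} {γ : ℝ}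

theorem IsProxMin.ne_top (hmin : IsProxMin f φ xb γ xp) (hy : φ y ≠ ⊤) : φ xp ≠ ⊤ := by
  intro h
  have hle := hmin y
  rw [proxObj, proxObj, h, EReal.coe_add_top, top_le_iff] at hle
  exact EReal.add_ne_top (EReal.coe_ne_top _) hy hle

theorem IsProxMin.toReal_add_le (hbot : ∀ z, φ z ≠ ⊥) (hmin : IsProxMin f φ xb γ xp)
    (hxb : φ xb ≠ ⊤) :
    (φ xp).toReal + ⟪gradient f xb, xp - xb⟫ + γ / 2 * ‖xp - xb‖ ^ 2 ≤ (φ xb).toReal := by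
  have h := hmin xb
  rw [proxObj, proxObj, sub_self, inner_zero_right, norm_zero,
    coe_add_eq_coe_add_toReal _ (hmin.ne_top hxb) (hbot xp),
    coe_add_eq_coe_add_toReal _ hxb (hbot xb), EReal.coe_le_coe_iff] at h
  linarith

theorem IsProxMin.toReal_add_inner_sub_le (hbot : ∀ z, φ z ≠ ⊥)
    (hmin : IsProxMin f φ xb γ xp) (hy : φ y ≠ ⊤) :
    (φ xp).toReal + ⟪-gradient f xb - γ • (xp - xb), y - xp⟫ - γ / 2 * ‖y - xp‖ ^ 2
      ≤ (φ y).toReal := by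
  have h := hmin y
  rw [proxObj, proxObj, coe_add_eq_coe_add_toReal _ (hmin.ne_top hy) (hbot xp),
    coe_add_eq_coe_add_toReal _ hy (hbot y), EReal.coe_le_coe_iff] at h
  have hsq : ‖y - xb‖ ^ 2 = ‖y - xp‖ ^ 2 + 2 * ⟪y - xp, xp - xb⟫ + ‖xp - xb‖ ^ 2 := by
    rw [← norm_add_sq_real, sub_add_sub_cancel]
  have hlin : ⟪gradient f xb, y - xb⟫ = ⟪gradient f xb, y - xp⟫ + ⟪gradient f xb, xp - xb⟫ := by
    rw [← inner_add_right, sub_add_sub_cancel]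
  rw [inner_sub_left, inner_neg_left, real_inner_smul_left, real_inner_comm (y - xp) (xp - xb)]
  rw [hsq, hlin] at h
  linear_combination h

theorem IsProxMin.mem_frechetSubdiff (hbot : ∀ z, φ z ≠ ⊥) (hmin : IsProxMin f φ xb γ xp)
    (hγ : 0 < γ) (hxp : φ xp ≠ ⊤) :
    -gradient f xb - γ • (xp - xb) ∈ FrechetSubdiff φ xp := by
  intro ε hε
  filter_upwards [nhdsWithin_le_nhds (Metric.ball_mem_nhds xp (by positivity : 0 < 2 * ε / γ))]
    with y hy
  by_cases hytop : φ y = ⊤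
  · rw [hytop]
    exact le_top
  have hprox := hmin.toReal_add_inner_sub_le hbot hytop
  have hsmall : γ / 2 * ‖y - xp‖ ^ 2 ≤ ε * ‖y - xp‖ := by
    rw [Metric.mem_ball, dist_eq_norm, lt_div_iff₀ hγ] at hy
    nlinarith [norm_nonneg (y - xp)]
  rw [← EReal.coe_toReal hxp (hbot xp), ← EReal.coe_toReal hytop (hbot y), ← EReal.coe_add,
    EReal.coe_le_coe_iff]
  linarith

/-- Comparing with `xb` and using the affine minorant gives
`γ / 2 * ‖xp - xb‖ ^ 2 ≤ A + B * ‖xp - xb‖`. -/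
theorem IsProxMin.norm_sub_lt {a : E} {b A B ρ : ℝ}
    (hab : ∀ z, ((⟪a, z⟫ + b : ℝ) : EReal) ≤ φ z) (hmin : IsProxMin f φ xb γ xp)
    (hxb : φ xb ≠ ⊤) (hρ : 0 < ρ) (hA : (φ xb).toReal - ⟪a, xb⟫ - b ≤ A) (hA0 : 0 ≤ A)
    (hB : ‖gradient f xb + a‖ ≤ B) (hγ : 2 * (A + B * ρ) / ρ ^ 2 < γ) :
    ‖xp - xb‖ < ρ := by
  have hbot : ∀ z, φ z ≠ ⊥ := fun z => ne_bot_of_le_ne_bot (EReal.coe_ne_bot _) (hab z)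
  have hdec := hmin.toReal_add_le hbot hxb
  have haff : ⟪a, xp⟫ + b ≤ (φ xp).toReal := by
    have h := hab xp
    rwa [← EReal.coe_toReal (hmin.ne_top hxb) (hbot xp), EReal.coe_le_coe_iff] at h
  have hcs := real_inner_le_norm (-(gradient f xb + a)) (xp - xb)
  rw [norm_neg] at hcs
  refine lt_of_half_mul_sq_le_add_mul hρ hA0 ((norm_nonneg _).trans hB) hγ ?_
  have hsplit : ⟪a, xp⟫ = ⟪a, xb⟫ + ⟪a, xp - xb⟫ := by rw [← inner_add_right, add_sub_cancel]
  rw [inner_neg_left, inner_add_left] at hcs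
  nlinarith [mul_le_mul_of_nonneg_right hB (norm_nonneg (xp - xb))]

theorem IsProxMin.psi_add_le_of_le {L δ : ℝ} (hbot : ∀ z, φ z ≠ ⊥)
    (hmin : IsProxMin f φ xb γ xp) (hxb : φ xb ≠ ⊤)
    (hdesc : f xp ≤ f xb + ⟪gradient f xb, xp - xb⟫ + L * ‖xp - xb‖ ^ 2)
    (hγ : 2 * L ≤ (1 - δ) * γ) :
    psi f φ xp + ((δ * γ / 2 * ‖xp - xb‖ ^ 2 : ℝ) : EReal) ≤ psi f φ xb := by
  have hdec := hmin.toReal_add_le hbot hxb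
  rw [psi, psi, coe_add_eq_coe_add_toReal _ (hmin.ne_top hxb) (hbot xp),
    coe_add_eq_coe_add_toReal _ hxb (hbot xb), ← EReal.coe_add, EReal.coe_le_coe_iff]
  nlinarith [mul_le_mul_of_nonneg_right hγ (sq_nonneg ‖xp - xb‖)]

theorem IsProxMin.psi_add_le {a : E} {b A B ρ L δ : ℝ} (hf : Differentiable ℝ f)
    (hab : ∀ z, ((⟪a, z⟫ + b : ℝ) : EReal) ≤ φ z) (hmin : IsProxMin f φ xb γ xp)
    (hxb : φ xb ≠ ⊤) (hρ : 0 < ρ) (hL0 : 0 ≤ L)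
    (hL : ∀ y ∈ Metric.ball xb ρ, ‖gradient f y - gradient f xb‖ ≤ L * ‖y - xb‖)
    (hA : (φ xb).toReal - ⟪a, xb⟫ - b ≤ A) (hA0 : 0 ≤ A) (hB : ‖gradient f xb + a‖ ≤ B)
    (hγρ : 2 * (A + B * ρ) / ρ ^ 2 < γ) (hγL : 2 * L ≤ (1 - δ) * γ) :
    psi f φ xp + ((δ * γ / 2 * ‖xp - xb‖ ^ 2 : ℝ) : EReal) ≤ psi f φ xb := by
  have hbot : ∀ z, φ z ≠ ⊥ := fun z => ne_bot_of_le_ne_bot (EReal.coe_ne_bot _) (hab z)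
  have hxp : ‖xp - xb‖ < ρ := hmin.norm_sub_lt hab hxb hρ hA hA0 hB hγρ
  have hdesc := le_add_inner_gradient_add_mul_sq hf (convex_ball xb ρ) hL0 hL
    (Metric.mem_ball_self hρ) (mem_ball_iff_norm.2 hxp)
  exact hmin.psi_add_le_of_le hbot hxb hdesc hγL

theorem mStationary_of_tendsto_isProxMin (hf : ContDiff ℝ 1 f)
    (hbot : ∀ z, φ z ≠ ⊥) (hlsc : LowerSemicontinuous φ) {u v : ℕ → E} {γ : ℕ → ℝ}
    {Γ : ℝ} {xstar : E} (hu : Tendsto u atTop (𝓝 xstar)) (hv : Tendsto v atTop (𝓝 xstar))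
    (hγ : ∀ n, 0 < γ n) (hΓ : ∀ᶠ n in atTop, γ n ≤ Γ)
    (hmin : ∀ n, IsProxMin f φ (u n) (γ n) (v n)) (hdom : ∀ n, φ (v n) ≠ ⊤)
    (hxstar : φ xstar ≠ ⊤) : MStationary f φ xstar := by
  set η : ℕ → E := fun n => -gradient f (u n) - γ n • (v n - u n)
  have hη : Tendsto η atTop (𝓝 (-gradient f xstar)) := by
    have hstep : Tendsto (fun n => γ n • (v n - u n)) atTop (𝓝 0) := by
      refine squeeze_zero_norm' ?_ (by simpa using ((hv.sub hu).norm).const_mul Γ)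
      filter_upwards [hΓ] with n hn
      rw [norm_smul, Real.norm_of_nonneg (hγ n).le]
      gcongr
    simpa using ((hf.continuous_gradient.tendsto xstar).comp hu).neg.sub hstep
  obtain ⟨p, hp⟩ : ∃ p : ℝ, φ xstar = p := ⟨_, (EReal.coe_toReal hxstar (hbot xstar)).symm⟩
  have hφ : Tendsto (fun n => φ (v n)) atTop (𝓝 (φ xstar)) := by
    refine hlsc.tendsto_of_le hv
      (c := fun n => ((p - ⟪η n, xstar - v n⟫ + Γ / 2 * ‖xstar - v n‖ ^ 2 : ℝ) : EReal)) ?_ ?_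
    · rw [hp, EReal.tendsto_coe]
      have hd : Tendsto (fun n => xstar - v n) atTop (𝓝 0) := by
        simpa using (tendsto_const_nhds (x := xstar)).sub hv
      simpa using (tendsto_const_nhds.sub (hη.inner hd)).add ((hd.norm.pow 2).const_mul (Γ / 2))
    · filter_upwards [hΓ] with n hn
      have hprox := (hmin n).toReal_add_inner_sub_le hbot hxstar
      rw [hp, EReal.toReal_coe] at hprox
      rw [← EReal.coe_toReal (hdom n) (hbot _), EReal.coe_le_coe_iff]
      nlinarith [mul_le_mul_of_nonneg_right hn (sq_nonneg ‖xstar - v n‖)]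
  exact ⟨hxstar, v, η, hv, hφ, hη, fun n => (hmin n).mem_frechetSubdiff hbot (hγ n) (hdom n)⟩

end ProxSubproblem

namespace MonoPG

variable {f : E → ℝ} {φ : E → EReal} {τ γmin γmax δ : ℝ} {x : ℕ → E} {γ : ℕ → ℝ}

theorem le_stepsize (hM : MonoPG f φ τ γmin γmax δ x γ) (hτ : 1 ≤ τ) (hγmin : 0 ≤ γmin)
    (k : ℕ) : γmin ≤ γ k := by
  obtain ⟨γ0, i, ⟨hγ0, -⟩, hγk, -⟩ := hM.stepsize k
  rw [hγk]
  exact hγ0.trans (le_mul_of_one_le_left (hγmin.trans hγ0) (one_le_pow₀ hτ))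

theorem toReal_add_le (hM : MonoPG f φ τ γmin γmax δ x γ) (hbot : ∀ z, φ z ≠ ⊥) (k : ℕ) :
    f (x (k + 1)) + (φ (x (k + 1))).toReal + δ * γ k / 2 * ‖x (k + 1) - x k‖ ^ 2
      ≤ f (x k) + (φ (x k)).toReal := by
  have h := hM.accept k
  rwa [psi, psi, coe_add_eq_coe_add_toReal _ (hM.dom _) (hbot _),
    coe_add_eq_coe_add_toReal _ (hM.dom _) (hbot _), ← EReal.coe_add,
    EReal.coe_le_coe_iff] at h

theorem antitone_toReal (hM : MonoPG f φ τ γmin γmax δ x γ) (hbot : ∀ z, φ z ≠ ⊥)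
    (hγ : ∀ k, 0 ≤ γ k) (hδ : 0 ≤ δ) : Antitone fun k => f (x k) + (φ (x k)).toReal :=
  antitone_nat_of_succ_le fun k => by
    nlinarith [hM.toReal_add_le hbot k,
      mul_nonneg (mul_nonneg hδ (hγ k)) (sq_nonneg ‖x (k + 1) - x k‖)]

theorem tendsto_succ_sub (hM : MonoPG f φ τ γmin γmax δ x γ) (hbot : ∀ z, φ z ≠ ⊥)
    (hτ : 1 ≤ τ) (hγmin : 0 < γmin) (hδ : 0 < δ) (hbdd : PsiBddBelow f φ) :
    Tendsto (fun k => x (k + 1) - x k) atTop (𝓝 0) := by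
  rw [tendsto_zero_iff_norm_tendsto_zero]
  obtain ⟨c, hc⟩ := hbdd
  refine tendsto_zero_of_add_mul_sq_le (S := fun k => f (x k) + (φ (x k)).toReal)
    (c := δ * γmin / 2) (by positivity) ⟨c, ?_⟩ fun k => ?_
  · rintro _ ⟨k, rfl⟩
    have h := hc (x k) (hM.dom k)
    rwa [psi, coe_add_eq_coe_add_toReal _ (hM.dom k) (hbot _), EReal.coe_le_coe_iff] at h
  · have hγk := hM.le_stepsize hτ hγmin.le k
    calc _ ≤ f (x (k + 1)) + (φ (x (k + 1))).toReal + δ * γ k / 2 * ‖x (k + 1) - x k‖ ^ 2 := by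
          gcongr
      _ ≤ _ := hM.toReal_add_le hbot k

/-- Above the bound, the sufficient-decrease test would already have accepted `γ_k / τ`. -/
theorem eventually_stepsize_le (hM : MonoPG f φ τ γmin γmax δ x γ) (hf : ContDiff ℝ 1 f)
    {a : E} {b C : ℝ} (hab : ∀ z, ((⟪a, z⟫ + b : ℝ) : EReal) ≤ φ z)
    (hτ : 0 < τ) (hδ : δ < 1) (hC : ∀ k, f (x k) + (φ (x k)).toReal ≤ C) {xstar : E}
    (hlip : ∃ L : ℝ, 0 < L ∧ ∃ U ∈ 𝓝 xstar, ∀ u ∈ U, ∀ v ∈ U,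
      ‖gradient f u - gradient f v‖ ≤ L * ‖u - v‖)
    {l : Filter ℕ} (hx : Tendsto x l (𝓝 xstar)) : ∃ Γ, ∀ᶠ k in l, γ k ≤ Γ := by
  obtain ⟨L, hL, U, hU, hLU⟩ := hlip
  obtain ⟨r, hr, hrU⟩ := Metric.mem_nhds_iff.1 hU
  set ρ := r / 2
  set A := max 0 (C - f xstar - ⟪a, xstar⟫ - b + 1)
  set B := ‖gradient f xstar + a‖ + 1
  have hnear_ev : ∀ᶠ k in l, dist (x k) xstar < ρ := Metric.tendsto_nhds.1 hx ρ (half_pos hr)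
  have hA_ev : ∀ᶠ k in l, C - f (x k) - ⟪a, x k⟫ - b < C - f xstar - ⟪a, xstar⟫ - b + 1 :=
    Tendsto.eventually_lt_const (lt_add_one _)
      (((continuous_const.sub hf.continuous).sub (continuous_const.inner continuous_id)).sub
        continuous_const |>.tendsto xstar |>.comp hx)
  have hB_ev : ∀ᶠ k in l, ‖gradient f (x k) + a‖ < B :=
    Tendsto.eventually_lt_const (lt_add_one _)
      (((hf.continuous_gradient.add continuous_const).norm.tendsto xstar).comp hx)
  refine ⟨max γmax (τ * max (2 * L / (1 - δ)) (2 * (A + B * ρ) / ρ ^ 2)), ?_⟩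
  filter_upwards [hnear_ev, hA_ev, hB_ev] with k hnear hAk hBk
  obtain ⟨γ0, _ | i, ⟨-, hγ0⟩, hγk, hback⟩ := hM.stepsize k
  · simp [hγk, hγ0]
  obtain ⟨xh, hmin, hfail⟩ := hback (by omega)
  by_contra! hbig
  have hγh : max (2 * L / (1 - δ)) (2 * (A + B * ρ) / ρ ^ 2) < γ k / τ := by
    rw [lt_div_iff₀ hτ, mul_comm]
    exact (le_max_right _ _).trans_lt hbig
  have hball : Metric.ball (x k) ρ ⊆ Metric.ball xstar r := fun y hy => by
    rw [Metric.mem_ball] at hy ⊢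
    linarith [hnear, dist_triangle y (x k) xstar, show ρ = r / 2 from rfl]
  have hγL : 2 * L ≤ (1 - δ) * (γ k / τ) := by
    have := (le_max_left _ _).trans_lt hγh
    rw [div_lt_iff₀ (by linarith)] at this
    linarith
  refine (hmin.psi_add_le (hf.differentiable one_ne_zero) hab (hM.dom k) (half_pos hr) hL.le
    (fun y hy => hLU _ (hrU (hball hy)) _ (hrU (hball (Metric.mem_ball_self (half_pos hr)))))
    ?_ (le_max_left _ _) hBk.le ((le_max_right _ _).trans_lt hγh) hγL).not_gt hfail
  linarith [hC k, le_max_right 0 (C - f xstar - ⟪a, xstar⟫ - b + 1)]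

end MonoPG

theorem stmt_11_general
    (f : E → ℝ) (φ : E → EReal) (hf : ContDiff ℝ 1 f)
    (hlsc : LowerSemicontinuous φ)
    (τ γmin γmax δ : ℝ) (hτ : 1 < τ) (hγmin : 0 < γmin)
    (hδ : δ ∈ Set.Ioo (0 : ℝ) 1)
    (x : ℕ → E) (γ : ℕ → ℝ)
    (hpsibdd : PsiBddBelow f φ) (haff : AffineBoundedBelow φ)
    (hlip : ∀ z : E, ∃ L : ℝ, 0 < L ∧ ∃ U ∈ 𝓝 z, ∀ u ∈ U, ∀ v ∈ U,
      ‖gradient f u - gradient f v‖ ≤ L * ‖u - v‖)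
    (hM : MonoPG f φ τ γmin γmax δ x γ)
    (xstar : E) (K : ℕ → ℕ) (hK : StrictMono K)
    (hconv : Tendsto (fun n => x (K n)) atTop (𝓝 xstar)) :
    MStationary f φ xstar := by
  obtain ⟨a, b, hab⟩ := haff
  have hbot : ∀ z, φ z ≠ ⊥ := fun z => ne_bot_of_le_ne_bot (EReal.coe_ne_bot _) (hab z)
  have hγ : ∀ k, 0 < γ k := fun k => hγmin.trans_le (hM.le_stepsize hτ.le hγmin.le k)
  have hS : ∀ k, f (x k) + (φ (x k)).toReal ≤ f (x 0) + (φ (x 0)).toReal := fun k =>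
    hM.antitone_toReal hbot (fun k => (hγ k).le) hδ.1.le (Nat.zero_le k)
  have hnext : Tendsto (fun n => x (K n + 1)) atTop (𝓝 xstar) := by
    simpa using hconv.add ((hM.tendsto_succ_sub hbot hτ.le hγmin hδ.1 hpsibdd).comp
      hK.tendsto_atTop)
  obtain ⟨Γ, hΓ⟩ := hM.eventually_stepsize_le hf hab (by linarith) hδ.2 hS (hlip xstar)
    (tendsto_map'_iff.2 hconv)
  exact mStationary_of_tendsto_isProxMin hf hbot hlsc hconv hnext (fun n => hγ (K n)) hΓ
    (fun n => hM.isMin (K n)) (fun n => hM.dom (K n + 1))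
    (hlsc.ne_top_of_tendsto hf.continuous hbot hconv (fun n => hM.dom (K n)) (fun n => hS (K n)))

/-- Theorem 3.6, second case: under Assumption A, if `∇f` is locally Lipschitz continuous,
then each accumulation point of a sequence generated by the monotone proximal gradient
method is an M-stationary point. -/
theorem stmt_11
    (f : E → ℝ) (φ : E → EReal) (hf : ContDiff ℝ 1 f)
    (hbot : ∀ z : E, φ z ≠ ⊥) (hlsc : LowerSemicontinuous φ)
    (τ γmin γmax δ : ℝ) (hτ : 1 < τ) (hγmin : 0 < γmin) (hγmm : γmin ≤ γmax)
    (hδ : δ ∈ Set.Ioo (0 : ℝ) 1)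
    (x : ℕ → E) (γ : ℕ → ℝ)
    (hpsibdd : PsiBddBelow f φ) (haff : AffineBoundedBelow φ)
    (hlip : ∀ z : E, ∃ L : ℝ, 0 < L ∧ ∃ U ∈ 𝓝 z, ∀ u ∈ U, ∀ v ∈ U,
      ‖gradient f u - gradient f v‖ ≤ L * ‖u - v‖)
    (hM : MonoPG f φ τ γmin γmax δ x γ)
    (xstar : E) (K : ℕ → ℕ) (hK : StrictMono K)
    (hconv : Tendsto (fun n => x (K n)) atTop (𝓝 xstar)) :
    MStationary f φ xstar :=
  stmt_11_general f φ hf hlsc τ γmin γmax δ hτ hγmin hδ x γ hpsibdd haff hlip hM xstar K hK hconv
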